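/- Let P, ℓ, μ > 0 and m(r) = μr³/(P²ℓ² + r²)^{3/2}. Define A(r) = 4m(r)ℓ/r³ − 4m'(r)ℓ/r² + 2m''(r)ℓ/r − 1/ℓ², B(r) = −2m(r)ℓ/r³ + 2m'(r)ℓ/r² − 1/ℓ², C(r) = 4m(r)ℓ/r³ − 1/ℓ², and K(r) = 4A(r)² + 16B(r)² + 4C(r)². Then K(r) → 24·(4μ/(P³ℓ²) − 1/ℓ²)² as r → 0⁺ (a finite value), and K(r) → 24/ℓ⁴ as r → +∞. -/

import Mathlib

open Filter Topology Set

/-!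
With `c = P²ℓ²` and `t = (c + r²)^{-1/2}` we have `m = μ r³ t³`, `t' = -r t³` and
`r² t² = 1 - c t²`, so `m/r³`, `m'/r²` and `m''/r` are polynomials in `t` (and `c`). Hence
`K = Φ(t)` for a polynomial `Φ`, and the two limits are `Φ` at `t(0) = 1/(Pℓ)` and at
`t(∞) = 0`. At `t = 1/(Pℓ)`, i.e. `c t² = 1`, the three Riemann components coincide, which is
where the factor `24 = 4 + 16 + 4` comes from.
-/

noncomputable def invSqrtAddSq (c r : ℝ) : ℝ := (√(c + r ^ 2))⁻¹

section invSqrtAddSq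

variable {c : ℝ}

lemma sq_mul_invSqrtAddSq_sq (hc : 0 < c) (r : ℝ) :
    r ^ 2 * invSqrtAddSq c r ^ 2 = 1 - c * invSqrtAddSq c r ^ 2 := by
  have hs : 0 < c + r ^ 2 := by positivity
  rw [invSqrtAddSq, inv_pow, Real.sq_sqrt hs.le]
  field_simp
  ring

lemma hasDerivAt_invSqrtAddSq (hc : 0 < c) (r : ℝ) :
    HasDerivAt (invSqrtAddSq c) (-r * invSqrtAddSq c r ^ 3) r := by
  have hs : 0 < c + r ^ 2 := by positivity
  have h := (((hasDerivAt_pow 2 r).const_add c).sqrt hs.ne').fun_inv (Real.sqrt_pos.2 hs).ne'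
  refine h.congr_deriv ?_
  unfold invSqrtAddSq
  field_simp
  norm_num

lemma continuous_invSqrtAddSq (hc : 0 < c) : Continuous (invSqrtAddSq c) :=
  continuous_iff_continuousAt.2 fun r => (hasDerivAt_invSqrtAddSq hc r).continuousAt

lemma tendsto_invSqrtAddSq_atTop (c : ℝ) : Tendsto (invSqrtAddSq c) atTop (𝓝 0) :=
  tendsto_inv_atTop_zero.comp <| Real.tendsto_sqrt_atTop.comp <|
    tendsto_atTop_add_const_left _ c (tendsto_pow_atTop two_ne_zero)

lemma invSqrtAddSq_sq_zero {a : ℝ} (ha : 0 ≤ a) : invSqrtAddSq (a ^ 2) 0 = a⁻¹ := by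
  simp [invSqrtAddSq, Real.sqrt_sq ha]

end invSqrtAddSq

noncomputable def bardeenMass (μ c r : ℝ) : ℝ := μ * r ^ 3 * invSqrtAddSq c r ^ 3

section bardeenMass

variable {μ c : ℝ}

lemma bardeenMass_eq (hc : 0 ≤ c) (r : ℝ) :
    bardeenMass μ c r = μ * r ^ 3 / (c + r ^ 2) ^ (3 / 2 : ℝ) := by
  rw [Real.rpow_div_two_eq_sqrt _ (by positivity), bardeenMass, invSqrtAddSq]
  norm_cast
  field_simp

lemma deriv_bardeenMass (hc : 0 < c) :
    deriv (bardeenMass μ c) = fun r => 3 * μ * c * r ^ 2 * invSqrtAddSq c r ^ 5 := by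
  funext r
  have h := ((hasDerivAt_pow 3 r).const_mul μ).mul ((hasDerivAt_invSqrtAddSq hc r).fun_pow 3)
  refine h.deriv.trans ?_
  linear_combination (-3 * μ * r ^ 2 * invSqrtAddSq c r ^ 3) * sq_mul_invSqrtAddSq_sq hc r

lemma deriv_deriv_bardeenMass (hc : 0 < c) :
    deriv (deriv (bardeenMass μ c)) = fun r =>
      3 * μ * c * r * invSqrtAddSq c r ^ 5 * (5 * c * invSqrtAddSq c r ^ 2 - 3) := by
  funext r
  have h := ((hasDerivAt_pow 2 r).const_mul (3 * μ * c)).mul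
    ((hasDerivAt_invSqrtAddSq hc r).fun_pow 5)
  rw [deriv_bardeenMass hc]
  refine h.deriv.trans ?_
  linear_combination (-15 * μ * c * r * invSqrtAddSq c r ^ 5) * sq_mul_invSqrtAddSq_sq hc r

end bardeenMass

/-- `K` in terms of `t = invSqrtAddSq c r`, using `m/r³ = μt³`, `m'/r² = 3μct⁵` and
`m''/r = 3μct⁵(5ct² - 3)`. -/
noncomputable def kretschmannPoly (ℓ μ c t : ℝ) : ℝ :=
  4 * (4 * ℓ * μ * t ^ 3 - 30 * ℓ * μ * c * t ^ 5 + 30 * ℓ * μ * c ^ 2 * t ^ 7 - 1 / ℓ ^ 2) ^ 2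
    + 16 * (-2 * ℓ * μ * t ^ 3 + 6 * ℓ * μ * c * t ^ 5 - 1 / ℓ ^ 2) ^ 2
    + 4 * (4 * ℓ * μ * t ^ 3 - 1 / ℓ ^ 2) ^ 2

lemma continuous_kretschmannPoly (ℓ μ c : ℝ) : Continuous (kretschmannPoly ℓ μ c) := by
  unfold kretschmannPoly; fun_prop

lemma kretschmannPoly_zero (ℓ μ c : ℝ) : kretschmannPoly ℓ μ c 0 = 24 / ℓ ^ 4 := by
  simp only [kretschmannPoly]; ring

lemma kretschmannPoly_of_mul_sq_eq_one {ℓ μ c t : ℝ} (h : c * t ^ 2 = 1) :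
    kretschmannPoly ℓ μ c t = 24 * (4 * ℓ * μ * t ^ 3 - 1 / ℓ ^ 2) ^ 2 := by
  have ht : t ≠ 0 := by rintro rfl; simp at h
  obtain rfl : c = 1 / t ^ 2 := by field_simp; linarith
  simp only [kretschmannPoly]
  field_simp
  ring

theorem bardeen_kretschmann_general (P ℓ μ : ℝ) (hP : 0 < P) (hℓ : 0 < ℓ)
    (m : ℝ → ℝ)
    (hm : ∀ r, m r = μ * r ^ 3 / (P ^ 2 * ℓ ^ 2 + r ^ 2) ^ ((3:ℝ)/2))
    (A B C K : ℝ → ℝ)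
    (hA : ∀ r, A r = 4 * m r * ℓ / r ^ 3 - 4 * deriv m r * ℓ / r ^ 2
        + 2 * deriv (deriv m) r * ℓ / r - 1 / ℓ ^ 2)
    (hB : ∀ r, B r = -2 * m r * ℓ / r ^ 3 + 2 * deriv m r * ℓ / r ^ 2 - 1 / ℓ ^ 2)
    (hC : ∀ r, C r = 4 * m r * ℓ / r ^ 3 - 1 / ℓ ^ 2)
    (hK : ∀ r, K r = 4 * A r ^ 2 + 16 * B r ^ 2 + 4 * C r ^ 2) :
    Tendsto K (𝓝[>] (0:ℝ)) (𝓝 (24 * (4 * μ / (P ^ 3 * ℓ ^ 2) - 1 / ℓ ^ 2) ^ 2)) ∧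
    Tendsto K atTop (𝓝 (24 / ℓ ^ 4)) := by
  set c := (P * ℓ) ^ 2 with hc_def
  have hc : 0 < c := by positivity
  have hm_eq : m = bardeenMass μ c :=
    funext fun r => by rw [hm, bardeenMass_eq hc.le, hc_def, mul_pow]
  have hK_eq : ∀ r ≠ 0, K r = kretschmannPoly ℓ μ c (invSqrtAddSq c r) := by
    intro r hr
    rw [hK, hA, hB, hC, hm_eq, deriv_deriv_bardeenMass hc, deriv_bardeenMass hc, bardeenMass,
      kretschmannPoly]
    field_simp
    ring
  have hK_lim : ∀ {l : Filter ℝ} {t₀ : ℝ}, Tendsto (invSqrtAddSq c) l (𝓝 t₀) →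
      (∀ᶠ r in l, r ≠ 0) → Tendsto K l (𝓝 (kretschmannPoly ℓ μ c t₀)) := fun ht hl =>
    ((continuous_kretschmannPoly ℓ μ c).tendsto _ |>.comp ht).congr' <|
      hl.mono fun r hr => (hK_eq r hr).symm
  constructor
  · have h := hK_lim (((continuous_invSqrtAddSq hc).tendsto 0).mono_left nhdsWithin_le_nhds)
      (eventually_nhdsWithin_of_forall fun r hr => (mem_Ioi.1 hr).ne')
    rwa [invSqrtAddSq_sq_zero (by positivity),
      kretschmannPoly_of_mul_sq_eq_one (by rw [hc_def]; field_simp),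
      show 4 * ℓ * μ * (P * ℓ)⁻¹ ^ 3 = 4 * μ / (P ^ 3 * ℓ ^ 2) by field_simp] at h
  · simpa only [kretschmannPoly_zero] using
      hK_lim (tendsto_invSqrtAddSq_atTop c) (eventually_ne_atTop 0)

/-- **Regularity of the Bardeen-class black string.** For
`m(r) = μr³/(P²ℓ² + r²)^{3/2}`, the Kretschmann scalar `K = 4A² + 16B² + 4C²` built from
the Riemann components `A`, `B`, `C` tends to the finite value
`24(4μ/(P³ℓ²) - 1/ℓ²)²` as `r → 0⁺` (regular axis) and to `24/ℓ⁴` as `r → +∞`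
(AdS asymptotics). -/
theorem bardeen_kretschmann (P ℓ μ : ℝ) (hP : 0 < P) (hℓ : 0 < ℓ) (hμ : 0 < μ)
    (m : ℝ → ℝ)
    (hm : ∀ r, m r = μ * r ^ 3 / (P ^ 2 * ℓ ^ 2 + r ^ 2) ^ ((3:ℝ)/2))
    (A B C K : ℝ → ℝ)
    (hA : ∀ r, A r = 4 * m r * ℓ / r ^ 3 - 4 * deriv m r * ℓ / r ^ 2
        + 2 * deriv (deriv m) r * ℓ / r - 1 / ℓ ^ 2)
    (hB : ∀ r, B r = -2 * m r * ℓ / r ^ 3 + 2 * deriv m r * ℓ / r ^ 2 - 1 / ℓ ^ 2)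
    (hC : ∀ r, C r = 4 * m r * ℓ / r ^ 3 - 1 / ℓ ^ 2)
    (hK : ∀ r, K r = 4 * A r ^ 2 + 16 * B r ^ 2 + 4 * C r ^ 2) :
    Tendsto K (𝓝[>] (0:ℝ)) (𝓝 (24 * (4 * μ / (P ^ 3 * ℓ ^ 2) - 1 / ℓ ^ 2) ^ 2)) ∧
    Tendsto K atTop (𝓝 (24 / ℓ ^ 4)) :=
  bardeen_kretschmann_general P ℓ μ hP hℓ m hm A B C K hA hB hC hK
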